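/- Let p be a polynomial in the space P₂ ⊕ span{x₁x₂x₃, x₁(x₂²+x₃²), x₂(x₁²+x₃²), x₃(x₁²+x₂²)} (the new 14-node element). If p vanishes at the four points (1,±1,±1) and at (1,0,0), then the integral of p(1,x₂,x₃) over [−1,1]² equals zero. -/

import Mathlib

/-
On the face `x₀ = 1` the rule `(1/3) · (sum of the values at the four corners) + (8/3) · (value at
the centre)` integrates the monomials `y ^ a * z ^ b` exactly when `a + b ≤ 2` or `a` or `b` is odd:
odd monomials integrate to zero and their corner values cancel in pairs, while `1`, `y²`, `z²` are
checked directly. Every polynomial of the space restricts to a combination of such monomials, so the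
face integral of one vanishing at the five nodes is zero.
-/

open MvPolynomial

noncomputable def NewSpace : Submodule ℝ (MvPolynomial (Fin 3) ℝ) :=
  MvPolynomial.restrictTotalDegree (Fin 3) ℝ 2 ⊔
    Submodule.span ℝ {X 0 * X 1 * X 2, X 0 * (X 1 ^ 2 + X 2 ^ 2),
      X 1 * (X 0 ^ 2 + X 2 ^ 2), X 2 * (X 0 ^ 2 + X 1 ^ 2)}

namespace FaceCubature

/-- Exponents `m` for which the cubature rule integrates `x ^ m` exactly over the face `x₀ = 1`. -/
def exactExponents : Set (Fin 3 →₀ ℕ) := {m | m 1 + m 2 ≤ 2 ∨ Odd (m 1) ∨ Odd (m 2)}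

lemma restrictTotalDegree_two_le :
    restrictTotalDegree (Fin 3) ℝ 2 ≤ restrictSupport ℝ exactExponents := by
  refine restrictSupport_mono ℝ fun m (hm : m.sum (fun _ e => e) ≤ 2) => Or.inl ?_
  rw [Finsupp.sum_fintype _ _ fun _ => rfl, Fin.sum_univ_three] at hm
  omega

lemma newSpace_le_restrictSupport : NewSpace ≤ restrictSupport ℝ exactExponents := by
  refine sup_le restrictTotalDegree_two_le (Submodule.span_le.mpr ?_)
  simp only [Set.insert_subset_iff, Set.singleton_subset_iff, SetLike.mem_coe, X, monomial_pow,
    monomial_mul, mul_add]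
  refine ⟨?_, add_mem ?_ ?_, add_mem ?_ ?_, add_mem ?_ ?_⟩ <;>
    simp [monomial_mem_restrictSupport, exactExponents]

lemma eval_face_monomial (m : Fin 3 →₀ ℕ) (c y z : ℝ) :
    eval ![1, y, z] (monomial m c) = c * y ^ m 1 * z ^ m 2 := by
  rw [eval_monomial, Finsupp.prod_pow, Fin.prod_univ_three]
  simp [mul_assoc]

lemma continuous_eval_face (p : MvPolynomial (Fin 3) ℝ) :
    Continuous fun v : ℝ × ℝ => eval ![1, v.1, v.2] p := by
  refine (continuous_eval p).comp (continuous_pi fun i => ?_)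
  fin_cases i <;> simp <;> fun_prop

lemma intervalIntegrable_integral_eval_face (p : MvPolynomial (Fin 3) ℝ) (a b c d : ℝ) :
    IntervalIntegrable (fun y => ∫ z in c..d, eval ![1, y, z] p) MeasureTheory.volume a b :=
  (intervalIntegral.continuous_parametric_intervalIntegral_of_continuous'
    (continuous_eval_face p) c d).intervalIntegrable a b

noncomputable def faceIntegral : MvPolynomial (Fin 3) ℝ →ₗ[ℝ] ℝ where
  toFun p := ∫ y in (-1 : ℝ)..1, ∫ z in (-1 : ℝ)..1, eval ![1, y, z] p
  map_add' p q := by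
    have hz (p : MvPolynomial (Fin 3) ℝ) (y : ℝ) :
        IntervalIntegrable (fun z => eval ![1, y, z] p) MeasureTheory.volume (-1) 1 :=
      ((continuous_eval_face p).comp (Continuous.prodMk_right y)).intervalIntegrable _ _
    simp only [map_add]
    simp only [intervalIntegral.integral_add (hz p _) (hz q _)]
    exact intervalIntegral.integral_add (intervalIntegrable_integral_eval_face p _ _ _ _)
      (intervalIntegrable_integral_eval_face q _ _ _ _)
  map_smul' c p := by
    simp only [smul_eval, intervalIntegral.integral_const_mul, RingHom.id_apply, smul_eq_mul]

noncomputable def faceCubature : MvPolynomial (Fin 3) ℝ →ₗ[ℝ] ℝ where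
  toFun p := (1 / 3) * (eval ![1, 1, 1] p + eval ![1, 1, -1] p + eval ![1, -1, 1] p
      + eval ![1, -1, -1] p) + (8 / 3) * eval ![1, 0, 0] p
  map_add' p q := by simp only [map_add]; ring
  map_smul' c p := by simp only [smul_eval, RingHom.id_apply, smul_eq_mul]; ring

lemma faceIntegral_monomial (m : Fin 3 →₀ ℕ) (c : ℝ) :
    faceIntegral (monomial m c)
      = c * ((∫ y in (-1 : ℝ)..1, y ^ m 1) * ∫ z in (-1 : ℝ)..1, z ^ m 2) := by
  simp only [faceIntegral, LinearMap.coe_mk, AddHom.coe_mk, eval_face_monomial,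
    intervalIntegral.integral_const_mul, intervalIntegral.integral_mul_const]
  ring

lemma faceCubature_monomial (m : Fin 3 →₀ ℕ) (c : ℝ) :
    faceCubature (monomial m c) = c * ((1 / 3) * (1 + (-1) ^ m 2 + (-1) ^ m 1
      + (-1) ^ m 1 * (-1) ^ m 2) + (8 / 3) * (0 ^ m 1 * 0 ^ m 2)) := by
  simp only [faceCubature, LinearMap.coe_mk, AddHom.coe_mk, eval_face_monomial, one_pow]
  ring

lemma integral_pow_of_odd {n : ℕ} (hn : Odd n) : ∫ x in (-1 : ℝ)..1, x ^ n = 0 := by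
  simp [integral_pow, (hn.add_one).neg_one_pow]

lemma integral_pow_mul_integral_pow_eq_cubature {a b : ℕ} (h : a + b ≤ 2 ∨ Odd a ∨ Odd b) :
    (∫ y in (-1 : ℝ)..1, y ^ a) * (∫ z in (-1 : ℝ)..1, z ^ b)
      = (1 / 3) * (1 + (-1) ^ b + (-1) ^ a + (-1) ^ a * (-1) ^ b) + (8 / 3) * (0 ^ a * 0 ^ b) := by
  rcases h with h | ha | hb
  · have ha : a ≤ 2 := by omega
    have hb : b ≤ 2 := by omega
    interval_cases a <;> interval_cases b <;> first | omega | norm_num [integral_pow]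
  · rw [integral_pow_of_odd ha, ha.neg_one_pow, zero_pow ha.pos.ne']
    ring
  · rw [integral_pow_of_odd hb, hb.neg_one_pow, zero_pow hb.pos.ne']
    ring

lemma faceIntegral_eq_faceCubature {p : MvPolynomial (Fin 3) ℝ}
    (hp : p ∈ restrictSupport ℝ exactExponents) : faceIntegral p = faceCubature p := by
  rw [restrictSupport_eq_span] at hp
  refine LinearMap.eqOn_span' ?_ hp
  rintro _ ⟨m, hm, rfl⟩
  rw [faceIntegral_monomial, faceCubature_monomial, integral_pow_mul_integral_pow_eq_cubature hm]

end FaceCubature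

open FaceCubature in
theorem stmt16 (p : MvPolynomial (Fin 3) ℝ) (hp : p ∈ NewSpace)
    (h1 : eval ![1, 1, 1] p = 0) (h2 : eval ![1, 1, -1] p = 0)
    (h3 : eval ![1, -1, 1] p = 0) (h4 : eval ![1, -1, -1] p = 0)
    (h5 : eval ![1, 0, 0] p = 0) :
    (∫ y in (-1 : ℝ)..1, ∫ z in (-1 : ℝ)..1, eval ![1, y, z] p) = 0 := by
  have h := faceIntegral_eq_faceCubature (newSpace_le_restrictSupport hp)
  simp only [faceIntegral, faceCubature, LinearMap.coe_mk, AddHom.coe_mk, h1, h2, h3, h4, h5] at h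
  linarith
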